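/- Let I = [T0,T], let g_k : I × ℝⁿ → ℝ for k = 1,…,m, and set C(t) := {x ∈ ℝⁿ : g_k(t,x) ≤ 0 for all k = 1,…,m}, assumed nonempty and closed for each t ∈ I. Assume there exists an extended real ρ ∈ (0,∞] such that: (1) for all t ∈ I and all k, the function g_k(t,·) is continuously differentiable on the open enlargement U_ρ(C(t)) := {y ∈ ℝⁿ : d_{C(t)}(y) < ρ}; (2) there exists γ > 0 such that for all t ∈ I, all k, and all x, y ∈ U_ρ(C(t)), ⟨∇g_k(t,·)(x) − ∇g_k(t,·)(y), x − y⟩ ≥ −γ·‖x − y‖²; (3) there exists δ > 0 such that for all (t,x) ∈ I × ℝⁿ with x in the boundary of C(t), there exists v̄ in the closed unit ball of ℝⁿ satisfying ⟨∇g_k(t,·)(x), v̄⟩ ≤ −δ for all k = 1,…,m. Then for all t ∈ I, the set C(t) is r-prox-regular with r = min{ρ, δ/γ}. -/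

import Mathlib

open MeasureTheory Set
open scoped RealInnerProductSpace ENNReal Pointwise NNReal

noncomputable section

variable {H : Type*} [NormedAddCommGroup H] [InnerProductSpace ℝ H]

/-- The proximal normal cone of `S` at `x`. -/
def proxNormalCone (S : Set H) (x : H) : Set H :=
  {v | ∃ σ : ℝ, 0 ≤ σ ∧ ∃ δ : ℝ, 0 < δ ∧
    ∀ y ∈ S ∩ Metric.ball x δ, ⟪v, y - x⟫ ≤ σ * ‖y - x‖ ^ 2}

/-- Uniform `r`-prox-regularity, `r ∈ (0, ∞]`. -/
def IsProxRegular (r : ℝ≥0∞) (S : Set H) : Prop :=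
  ∀ x ∈ S, ∀ v ∈ proxNormalCone S x, v ≠ 0 →
    ∀ y ∈ S, ⟪‖v‖⁻¹ • v, y - x⟫ ≤ ((2 * r)⁻¹).toReal * ‖y - x‖ ^ 2

/-!
Fix a point `x` of `C(t)` with a unit proximal normal `v` and a second point `y`, and put
`u = y - x`. If `‖u‖ ≥ 2r`, Cauchy–Schwarz already gives `⟪v, u⟫ ≤ ‖u‖²/(2r)`. Otherwise the
segment `[x, y]` stays within distance `r ≤ ρ` of `C(t)`, and integrating the hypomonotonicity
of the gradients along it shows `⟪∇g_k(x), u⟫ ≤ γ‖u‖²/2` for every constraint active at `x`.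
A proximal normal makes a nonpositive angle with every direction that strictly decreases the
active constraints. A nonzero proximal normal forces `x` onto the boundary, where the Slater
direction `v̄` exists; applied to `u + μ v̄` with `μ ↓ γ‖u‖²/(2δ)` this yields
`⟪v, u⟫ ≤ γ‖u‖²/(2δ) ≤ ‖u‖²/(2r)`.
-/

open Filter Topology Metric

lemma eventually_add_smul_mem {E : Type*} [SeminormedAddCommGroup E] [NormedSpace ℝ E]
    {s : Set E} {x : E} (hs : s ∈ 𝓝 x) (w : E) :
    ∀ᶠ t in 𝓝[>] (0 : ℝ), x + t • w ∈ s := by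
  have hline : Tendsto (fun t : ℝ => x + t • w) (𝓝 0) (𝓝 x) := by
    simpa using (show Continuous fun t : ℝ => x + t • w by fun_prop).tendsto 0
  exact (hline.mono_left nhdsWithin_le_nhds).eventually_mem hs

lemma infDist_le_dist_div_two_of_mem_segment {E : Type*} [SeminormedAddCommGroup E]
    [NormedSpace ℝ E] {S : Set E} {x y z : E} (hx : x ∈ S) (hy : y ∈ S)
    (hz : z ∈ segment ℝ x y) : infDist z S ≤ dist x y / 2 := by
  have hzx := infDist_le_dist_of_mem (x := z) hx
  have hzy := infDist_le_dist_of_mem (x := z) hy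
  have hsum := dist_add_dist_of_mem_segment hz
  rw [dist_comm z x] at hzx
  linarith

lemma inner_le_zero_of_mem_proxNormalCone {S : Set H} {x v w : H}
    (hv : v ∈ proxNormalCone S x) (hw : ∀ᶠ t in 𝓝[>] (0 : ℝ), x + t • w ∈ S) :
    ⟪v, w⟫ ≤ 0 := by
  obtain ⟨σ, -, ε, hε, hprox⟩ := hv
  have hbound : ∀ᶠ t in 𝓝[>] (0 : ℝ), ⟪v, w⟫ ≤ σ * ‖w‖ ^ 2 * t := by
    filter_upwards [hw, eventually_add_smul_mem (ball_mem_nhds x hε) w, self_mem_nhdsWithin]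
      with t htS htB (ht : 0 < t)
    have h := hprox _ ⟨htS, htB⟩
    rw [add_sub_cancel_left, real_inner_smul_right, norm_smul, Real.norm_eq_abs,
      abs_of_pos ht] at h
    exact le_of_mul_le_mul_left (by linarith) ht
  have hlim : Tendsto (fun t : ℝ => σ * ‖w‖ ^ 2 * t) (𝓝[>] 0) (𝓝 0) := by
    simpa using ((continuous_const_mul (σ * ‖w‖ ^ 2)).tendsto 0).mono_left nhdsWithin_le_nhds
  exact ge_of_tendsto hlim hbound

lemma mem_frontier_of_mem_proxNormalCone {S : Set H} {x v : H} (hx : x ∈ S)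
    (hv : v ∈ proxNormalCone S x) (hv0 : v ≠ 0) : x ∈ frontier S := by
  refine ⟨subset_closure hx, fun hint => hv0 ?_⟩
  have hvv : ⟪v, v⟫ ≤ 0 := inner_le_zero_of_mem_proxNormalCone hv <|
    eventually_add_smul_mem (mem_interior_iff_mem_nhds.mp hint) v
  exact inner_self_eq_zero.mp (le_antisymm hvv real_inner_self_nonneg)

lemma inner_le_of_slater_direction {ι : Type*} (s : Set ι) (a : ι → H) {v u w₀ : H} {c δ : ℝ}
    (hc : 0 ≤ c) (hδ : 0 < δ) (hw₀ : ‖w₀‖ ≤ 1) (haw₀ : ∀ k ∈ s, ⟪a k, w₀⟫ ≤ -δ)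
    (hau : ∀ k ∈ s, ⟪a k, u⟫ ≤ c) (hv : ∀ w, (∀ k ∈ s, ⟪a k, w⟫ < 0) → ⟪v, w⟫ ≤ 0) :
    ⟪v, u⟫ ≤ c / δ * ‖v‖ := by
  have hvw₀ : -⟪v, w₀⟫ ≤ ‖v‖ := by
    have := (abs_real_inner_le_norm v w₀).trans
      (mul_le_of_le_one_right (norm_nonneg v) hw₀)
    linarith [neg_abs_le ⟪v, w₀⟫]
  have hbound : ∀ μ, c / δ < μ → ⟪v, u⟫ ≤ μ * ‖v‖ := by
    intro μ hμ
    have hμ0 : 0 < μ := (div_nonneg hc hδ.le).trans_lt hμ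
    have hcμ : c < μ * δ := (div_lt_iff₀ hδ).mp hμ
    have h := hv (u + μ • w₀) fun k hk => by
      rw [inner_add_right, real_inner_smul_right]
      nlinarith [hau k hk, haw₀ k hk]
    rw [inner_add_right, real_inner_smul_right] at h
    nlinarith
  have hlim : Tendsto (fun μ => μ * ‖v‖) (𝓝[>] (c / δ)) (𝓝 (c / δ * ‖v‖)) :=
    ((continuous_mul_const ‖v‖).tendsto _).mono_left nhdsWithin_le_nhds
  exact ge_of_tendsto hlim (eventually_nhdsWithin_of_forall hbound)

lemma toReal_inv_two_mul_ofReal {r : ℝ} (hr : 0 ≤ r) :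
    ((2 * ENNReal.ofReal r)⁻¹).toReal = (2 * r)⁻¹ := by
  rw [ENNReal.toReal_inv, ENNReal.toReal_mul, ENNReal.toReal_ofReal hr]
  norm_num

variable [CompleteSpace H]

lemma DifferentiableAt.hasDerivAt_comp_add_smul {f : H → ℝ} {x w : H} {s : ℝ}
    (hf : DifferentiableAt ℝ f (x + s • w)) :
    HasDerivAt (fun t : ℝ => f (x + t • w)) ⟪gradient f (x + s • w), w⟫ s := by
  have hline : HasDerivAt (fun t : ℝ => x + t • w) w s := by
    simpa using ((hasDerivAt_id s).smul_const w).const_add x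
  have h := hf.hasFDerivAt.comp_hasDerivAt s hline
  rwa [← inner_gradient_left] at h

lemma eventually_nonpos_comp_add_smul {f : H → ℝ} {x w : H} (hf : DifferentiableAt ℝ f x)
    (hx : f x ≤ 0) (hw : f x = 0 → ⟪gradient f x, w⟫ < 0) :
    ∀ᶠ t in 𝓝[>] (0 : ℝ), f (x + t • w) ≤ 0 := by
  rcases hx.lt_or_eq with hlt | heq
  · exact (eventually_add_smul_mem (hf.continuousAt.preimage_mem_nhds (Iio_mem_nhds hlt)) w).mono
      fun _ ht => le_of_lt ht
  · have hf0 : DifferentiableAt ℝ f (x + (0 : ℝ) • w) := by rwa [zero_smul, add_zero]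
    have hderiv : HasDerivAt (fun t : ℝ => f (x + t • w)) ⟪gradient f x, w⟫ 0 := by
      simpa using hf0.hasDerivAt_comp_add_smul
    filter_upwards [hderiv.tendsto_slope_zero_right.eventually (Iio_mem_nhds (hw heq)),
      self_mem_nhdsWithin] with t ht (htpos : 0 < t)
    simp only [zero_add, zero_smul, add_zero, heq, sub_zero, smul_eq_mul] at ht
    exact (neg_of_mul_neg_right ht (inv_nonneg.mpr htpos.le)).le

lemma inner_gradient_le_of_hypomonotone {f : H → ℝ} {U : Set H} {γ : ℝ}
    (hdiff : ∀ p ∈ U, DifferentiableAt ℝ f p)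
    (hmono : ∀ p ∈ U, ∀ q ∈ U, -γ * ‖p - q‖ ^ 2 ≤ ⟪gradient f p - gradient f q, p - q⟫)
    {x y : H} (hxy : segment ℝ x y ⊆ U) :
    ⟪gradient f x, y - x⟫ ≤ f y - f x + γ / 2 * ‖y - x‖ ^ 2 := by
  set u := y - x
  have hseg : ∀ s ∈ Icc (0 : ℝ) 1, x + s • u ∈ U := fun s hs =>
    hxy (segment_eq_image' ℝ x y ▸ mem_image_of_mem _ hs)
  set ψ : ℝ → ℝ := fun s => f (x + s • u) - s * ⟪gradient f x, u⟫ + γ / 2 * ‖u‖ ^ 2 * s ^ 2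
  have hψ : ∀ s ∈ Icc (0 : ℝ) 1,
      HasDerivAt ψ (⟪gradient f (x + s • u), u⟫ - ⟪gradient f x, u⟫ + γ * ‖u‖ ^ 2 * s) s :=
    fun s hs => (((hdiff _ (hseg s hs)).hasDerivAt_comp_add_smul.sub
      ((hasDerivAt_id s).mul_const _)).add ((hasDerivAt_pow 2 s).const_mul _)).congr_deriv
      (by simp only [one_mul]; ring)
  have hψ_mono : MonotoneOn ψ (Icc 0 1) := by
    refine monotoneOn_of_hasDerivWithinAt_nonneg (convex_Icc 0 1)
      (fun s hs => (hψ s hs).continuousAt.continuousWithinAt)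
      (fun s hs => (hψ s (interior_subset hs)).hasDerivWithinAt) fun s hs => ?_
    rw [interior_Icc] at hs
    have hx : x ∈ U := by simpa using hseg 0 (left_mem_Icc.mpr zero_le_one)
    have h := hmono _ (hseg s (Ioo_subset_Icc_self hs)) x hx
    rw [add_sub_cancel_left, inner_sub_left, real_inner_smul_right, real_inner_smul_right,
      norm_smul, Real.norm_eq_abs, abs_of_pos hs.1] at h
    nlinarith [hs.1]
  have h01 := hψ_mono (left_mem_Icc.mpr zero_le_one) (right_mem_Icc.mpr zero_le_one) zero_le_one
  simp only [ψ, zero_smul, add_zero, zero_mul, sub_zero, one_smul, one_mul, u,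
    add_sub_cancel] at h01
  linarith

section Constraints

variable {ι : Type*} [Finite ι] {f : ι → H → ℝ} {S U : Set H} {γ δ : ℝ}

lemma eventually_add_smul_mem_of_active_inner_gradient_neg
    (hS : S = {x | ∀ k, f k x ≤ 0}) {x w : H} (hx : x ∈ S) (hdiff : ∀ k, DifferentiableAt ℝ (f k) x)
    (hw : ∀ k ∈ {k | f k x = 0}, ⟪gradient (f k) x, w⟫ < 0) :
    ∀ᶠ t in 𝓝[>] (0 : ℝ), x + t • w ∈ S := by
  rw [hS] at hx ⊢
  exact eventually_all.mpr fun k => eventually_nonpos_comp_add_smul (hdiff k) (hx k) (hw k)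

lemma inner_proxNormal_le_of_constraints (hS : S = {x | ∀ k, f k x ≤ 0}) (hγ : 0 ≤ γ)
    (hδ : 0 < δ) (hdiff : ∀ k, ∀ p ∈ U, DifferentiableAt ℝ (f k) p)
    (hmono : ∀ k, ∀ p ∈ U, ∀ q ∈ U, -γ * ‖p - q‖ ^ 2 ≤ ⟪gradient (f k) p - gradient (f k) q, p - q⟫)
    (hslater : ∀ x ∈ frontier S, ∃ w ∈ closedBall (0 : H) 1, ∀ k, ⟪gradient (f k) x, w⟫ ≤ -δ)
    {x y v : H} (hx : x ∈ S) (hy : y ∈ S) (hv : v ∈ proxNormalCone S x) (hv0 : v ≠ 0)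
    (hxy : segment ℝ x y ⊆ U) :
    ⟪v, y - x⟫ ≤ γ / 2 * ‖y - x‖ ^ 2 / δ * ‖v‖ := by
  obtain ⟨w₀, hw₀, hslater_x⟩ := hslater x (mem_frontier_of_mem_proxNormalCone hx hv hv0)
  have hxU : x ∈ U := hxy (left_mem_segment ℝ x y)
  have hactive : ∀ k ∈ {k | f k x = 0}, ⟪gradient (f k) x, y - x⟫ ≤ γ / 2 * ‖y - x‖ ^ 2 := by
    intro k hk
    have h := inner_gradient_le_of_hypomonotone (hdiff k) (hmono k) hxy
    have hyk : f k y ≤ 0 := by rw [hS] at hy; exact hy k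
    rw [show f k x = 0 from hk] at h
    linarith
  exact inner_le_of_slater_direction _ _ (by positivity) hδ (mem_closedBall_zero_iff.mp hw₀)
    (fun k _ => hslater_x k) hactive fun w hw =>
      inner_le_zero_of_mem_proxNormalCone hv <|
        eventually_add_smul_mem_of_active_inner_gradient_neg hS hx (fun k => hdiff k x hxU) hw

theorem isProxRegular_ofReal_of_constraints (hS : S = {x | ∀ k, f k x ≤ 0}) {r : ℝ}
    (hr : 0 < r) (hγ : 0 ≤ γ) (hδ : 0 < δ) (hrγ : r * γ ≤ δ)
    (hU : ∀ y, infDist y S < r → y ∈ U) (hdiff : ∀ k, ∀ p ∈ U, DifferentiableAt ℝ (f k) p)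
    (hmono : ∀ k, ∀ p ∈ U, ∀ q ∈ U, -γ * ‖p - q‖ ^ 2 ≤ ⟪gradient (f k) p - gradient (f k) q, p - q⟫)
    (hslater : ∀ x ∈ frontier S, ∃ w ∈ closedBall (0 : H) 1, ∀ k, ⟪gradient (f k) x, w⟫ ≤ -δ) :
    IsProxRegular (ENNReal.ofReal r) S := by
  intro x hx v hv hv0 y hy
  rw [toReal_inv_two_mul_ofReal hr.le, real_inner_smul_left]
  have hvpos : 0 < ‖v‖ := norm_pos_iff.mpr hv0
  rcases le_or_gt (2 * r) ‖y - x‖ with hfar | hnear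
  · calc ‖v‖⁻¹ * ⟪v, y - x⟫ ≤ ‖v‖⁻¹ * (‖v‖ * ‖y - x‖) := by
          gcongr; exact real_inner_le_norm v (y - x)
      _ = ‖y - x‖ := by field_simp
      _ ≤ (2 * r)⁻¹ * ‖y - x‖ ^ 2 := by
          rw [inv_mul_eq_div, le_div_iff₀ (by positivity)]
          nlinarith [norm_nonneg (y - x)]
  · have hseg : segment ℝ x y ⊆ U := fun z hz =>
      hU z <| (infDist_le_dist_div_two_of_mem_segment hx hy hz).trans_lt <| by
        rw [dist_eq_norm']; linarith
    calc ‖v‖⁻¹ * ⟪v, y - x⟫ ≤ ‖v‖⁻¹ * (γ / 2 * ‖y - x‖ ^ 2 / δ * ‖v‖) := by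
          gcongr
          exact inner_proxNormal_le_of_constraints hS hγ hδ hdiff hmono hslater hx hy hv hv0 hseg
      _ = γ / 2 * ‖y - x‖ ^ 2 / δ := by field_simp
      _ ≤ (2 * r)⁻¹ * ‖y - x‖ ^ 2 := by
          have hcoef : γ / 2 ≤ (2 * r)⁻¹ * δ := by
            rw [inv_mul_eq_div, le_div_iff₀ (by positivity)]
            linarith
          rw [div_le_iff₀ hδ]
          nlinarith [mul_le_mul_of_nonneg_right hcoef (sq_nonneg ‖y - x‖)]

end Constraints

theorem prox_regularity_of_inequality_constraints_general
    (T0 T : ℝ) (n m : ℕ)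
    (g : Fin m → ℝ → EuclideanSpace ℝ (Fin n) → ℝ)
    (C : ℝ → Set (EuclideanSpace ℝ (Fin n)))
    (hCdef : ∀ t ∈ Icc T0 T, C t = {x | ∀ k : Fin m, g k t x ≤ 0})
    (ρ : ℝ≥0∞) (hρ : 0 < ρ)
    (hdiff : ∀ t ∈ Icc T0 T, ∀ k : Fin m,
      ContDiffOn ℝ 1 (g k t) {y | ENNReal.ofReal (Metric.infDist y (C t)) < ρ})
    (γ : ℝ) (hγ : 0 < γ)
    (hhypo : ∀ t ∈ Icc T0 T, ∀ k : Fin m,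
      ∀ x ∈ {y : EuclideanSpace ℝ (Fin n) | ENNReal.ofReal (Metric.infDist y (C t)) < ρ},
      ∀ z ∈ {y : EuclideanSpace ℝ (Fin n) | ENNReal.ofReal (Metric.infDist y (C t)) < ρ},
        ⟪gradient (g k t) x - gradient (g k t) z, x - z⟫ ≥ -γ * ‖x - z‖ ^ 2)
    (δ : ℝ) (hδ : 0 < δ)
    (hslater : ∀ t ∈ Icc T0 T, ∀ x ∈ frontier (C t),
      ∃ v ∈ Metric.closedBall (0 : EuclideanSpace ℝ (Fin n)) 1,
        ∀ k : Fin m, ⟪gradient (g k t) x, v⟫ ≤ -δ) :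
    ∀ t ∈ Icc T0 T, IsProxRegular (min ρ (ENNReal.ofReal (δ / γ))) (C t) := by
  intro t ht
  set R := min ρ (ENNReal.ofReal (δ / γ))
  have hR_ne_top : R ≠ ∞ := ne_top_of_le_ne_top ENNReal.ofReal_ne_top (min_le_right _ _)
  have hR_pos : 0 < R.toReal :=
    ENNReal.toReal_pos (lt_min hρ (ENNReal.ofReal_pos.mpr (div_pos hδ hγ))).ne' hR_ne_top
  have hRγ : R.toReal * γ ≤ δ := by
    rw [← le_div_iff₀ hγ, ← ENNReal.toReal_ofReal (div_pos hδ hγ).le]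
    exact ENNReal.toReal_mono ENNReal.ofReal_ne_top (min_le_right _ _)
  have hU_open : IsOpen {y | ENNReal.ofReal (infDist y (C t)) < ρ} :=
    isOpen_lt (ENNReal.continuous_ofReal.comp (continuous_infDist_pt _)) continuous_const
  rw [← ENNReal.ofReal_toReal hR_ne_top]
  refine isProxRegular_ofReal_of_constraints (hCdef t ht) hR_pos hγ.le hδ hRγ
    (fun y hy => ?_) (fun k p hp => ?_) (hhypo t ht) (hslater t ht)
  · calc ENNReal.ofReal (infDist y (C t)) < ENNReal.ofReal R.toReal :=
          (ENNReal.ofReal_lt_ofReal_iff hR_pos).mpr hy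
      _ ≤ ρ := (ENNReal.ofReal_toReal hR_ne_top).trans_le (min_le_left _ _)
  · exact ((hdiff t ht k).differentiableOn one_ne_zero).differentiableAt (hU_open.mem_nhds hp)

/-- Theorem 5.1: prox-regularity of a moving set described by finitely many
inequality constraints. -/
theorem prox_regularity_of_inequality_constraints
    (T0 T : ℝ) (hT : T0 < T) (n m : ℕ)
    (g : Fin m → ℝ → EuclideanSpace ℝ (Fin n) → ℝ)
    (C : ℝ → Set (EuclideanSpace ℝ (Fin n)))
    (hCdef : ∀ t ∈ Icc T0 T, C t = {x | ∀ k : Fin m, g k t x ≤ 0})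
    (hCne : ∀ t ∈ Icc T0 T, (C t).Nonempty)
    (hCcl : ∀ t ∈ Icc T0 T, IsClosed (C t))
    (ρ : ℝ≥0∞) (hρ : 0 < ρ)
    (hdiff : ∀ t ∈ Icc T0 T, ∀ k : Fin m,
      ContDiffOn ℝ 1 (g k t) {y | ENNReal.ofReal (Metric.infDist y (C t)) < ρ})
    (γ : ℝ) (hγ : 0 < γ)
    (hhypo : ∀ t ∈ Icc T0 T, ∀ k : Fin m,
      ∀ x ∈ {y : EuclideanSpace ℝ (Fin n) | ENNReal.ofReal (Metric.infDist y (C t)) < ρ},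
      ∀ z ∈ {y : EuclideanSpace ℝ (Fin n) | ENNReal.ofReal (Metric.infDist y (C t)) < ρ},
        ⟪gradient (g k t) x - gradient (g k t) z, x - z⟫ ≥ -γ * ‖x - z‖ ^ 2)
    (δ : ℝ) (hδ : 0 < δ)
    (hslater : ∀ t ∈ Icc T0 T, ∀ x ∈ frontier (C t),
      ∃ v ∈ Metric.closedBall (0 : EuclideanSpace ℝ (Fin n)) 1,
        ∀ k : Fin m, ⟪gradient (g k t) x, v⟫ ≤ -δ) :
    ∀ t ∈ Icc T0 T, IsProxRegular (min ρ (ENNReal.ofReal (δ / γ))) (C t) :=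
  prox_regularity_of_inequality_constraints_general T0 T n m g C hCdef ρ hρ hdiff γ hγ hhypo δ hδ
    hslater
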